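/- Suppose for each j = 1,…,n, (R_j, B_j, L_j) is a Riesz sequence triple with bounds C_j ≤ D_j. Then with 𝐑_n = R_n⋯R_1, 𝐁_n = R_n⋯R_2(B_1) + ⋯ + B_n, and Λ_n = L_1 + R_1ᵀ(L_2) + ⋯ + (R_1ᵀ⋯R_{n-1}ᵀ)(L_n), the triple (𝐑_n, 𝐁_n, Λ_n) forms a Riesz sequence triple with bounds ∏_{j=1}^n C_j and ∏_{j=1}^n D_j. -/

import Mathlib

open Complex Matrix Finset

noncomputable section

/-- Real version of an integer matrix. -/
def realMat {d : ℕ} (R : Matrix (Fin d) (Fin d) ℤ) : Matrix (Fin d) (Fin d) ℝ :=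
  R.map (Int.cast)

/-- `R` is expanding: all (complex) eigenvalues have modulus strictly greater than 1. -/
def Expanding {d : ℕ} (R : Matrix (Fin d) (Fin d) ℤ) : Prop :=
  ∀ z : ℂ, (R.map (Int.cast : ℤ → ℂ)).charpoly.IsRoot z → 1 < ‖z‖

/-- Euclidean inner product on `ℝ^d`. -/
def ip {d : ℕ} (x y : Fin d → ℝ) : ℝ := ∑ i, x i * y i

/-- The vector `e_{R,λ} = (1/√#B) (e^{2πi⟨R⁻¹b,λ⟩})_{b∈B} ∈ ℂ^{#B}`. -/
def eVec {d : ℕ} (R : Matrix (Fin d) (Fin d) ℤ) (B : Finset (Fin d → ℤ))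
    (lam : Fin d → ℤ) : B → ℂ :=
  fun b => ((Real.sqrt B.card : ℂ))⁻¹ *
    Complex.exp (2 * Real.pi * Complex.I *
      (ip ((realMat R)⁻¹ *ᵥ (fun j => ((b : Fin d → ℤ) j : ℝ))) (fun i => (lam i : ℝ))))

/-- `(R,B,L)` is a frame triple with bounds `C ≤ D`. -/
def IsFrameTriple {d : ℕ} (R : Matrix (Fin d) (Fin d) ℤ) (B L : Finset (Fin d → ℤ))
    (C D : ℝ) : Prop :=
  ∀ x : B → ℂ,
    C * ∑ b, ‖x b‖ ^ 2 ≤ ∑ lam ∈ L, ‖∑ b, x b * (starRingEnd ℂ) (eVec R B lam b)‖ ^ 2 ∧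
    ∑ lam ∈ L, ‖∑ b, x b * (starRingEnd ℂ) (eVec R B lam b)‖ ^ 2 ≤ D * ∑ b, ‖x b‖ ^ 2

/-- `(R,B,L)` is a Riesz sequence triple with bounds `C ≤ D`. -/
def IsRieszTriple {d : ℕ} (R : Matrix (Fin d) (Fin d) ℤ) (B L : Finset (Fin d → ℤ))
    (C D : ℝ) : Prop :=
  ∀ a : L → ℂ,
    C * ∑ lam, ‖a lam‖ ^ 2 ≤ ∑ b, ‖∑ lam, a lam * eVec R B lam b‖ ^ 2 ∧
    ∑ b, ‖∑ lam, a lam * eVec R B lam b‖ ^ 2 ≤ D * ∑ lam, ‖a lam‖ ^ 2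


/-- `𝐑_n = R_n ⋯ R_1` (with 0-based indexing: `bigR R n = R (n-1) * ⋯ * R 0`). -/
def bigR {d : ℕ} (R : ℕ → Matrix (Fin d) (Fin d) ℤ) : ℕ → Matrix (Fin d) (Fin d) ℤ
  | 0 => 1
  | n + 1 => R n * bigR R n

def castVec {d : ℕ} (v : Fin d → ℤ) : Fin d → ℝ := fun i => (v i : ℝ)

/-- The point `𝐑_n⁻¹𝐛 = ∑_{k=1}^n 𝐑_k⁻¹ b_k` associated to a digit tuple. -/
def tuplePoint {d n : ℕ} (R : ℕ → Matrix (Fin d) (Fin d) ℤ) (B : ℕ → Finset (Fin d → ℤ))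
    (t : (j : Fin n) → (B (j : ℕ))) : Fin d → ℝ :=
  ∑ j : Fin n, (realMat (bigR R ((j : ℕ) + 1)))⁻¹ *ᵥ castVec (t j)

/-- The frequency `λ = ∑_{k=1}^n (R_1ᵀ⋯R_{k-1}ᵀ) l_k ∈ Λ_n` associated to a tuple. -/
def tupleFreq {d n : ℕ} (R : ℕ → Matrix (Fin d) (Fin d) ℤ) (L : ℕ → Finset (Fin d → ℤ))
    (l : (j : Fin n) → (L (j : ℕ))) : Fin d → ℤ :=
  ∑ j : Fin n, (bigR R (j : ℕ))ᵀ *ᵥ ((l j : Fin d → ℤ))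

/-- The concatenated exponential vector entry
`(1/√(∏ #B_j)) e^{2πi ⟨𝐑_n⁻¹𝐛, λ⟩}` for the triple `(𝐑_n, 𝐁_n, Λ_n)`. -/
def bigEVec {d n : ℕ} (R : ℕ → Matrix (Fin d) (Fin d) ℤ) (B L : ℕ → Finset (Fin d → ℤ))
    (t : (j : Fin n) → (B (j : ℕ))) (l : (j : Fin n) → (L (j : ℕ))) : ℂ :=
  ((Real.sqrt (∏ j ∈ Finset.range n, ((B j).card : ℝ)) : ℂ))⁻¹ *
    Complex.exp (2 * Real.pi * Complex.I *
      (ip (tuplePoint R B t) (castVec (tupleFreq R L l))))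

/-! Peel off the first triple. Writing `t = (b₁, t')` and `l = (λ₁, l')`, the exponential of the
concatenated triple factors as `e_{R₁,λ₁}(b₁) · e^{2πi⟨R₁⁻¹𝐑'⁻¹t', λ₁⟩} · e'_{l'}(t')`, because the
cross term `⟨b₁, Λ'(l')⟩` is an integer. For fixed `t'` the synthesis sum is thus a synthesis sum of
`(R₁, B₁, L₁)` whose coefficients are, up to unimodular phases, synthesis sums of the remaining
`n - 1` triples; the bounds of `(R₁, B₁, L₁)` and, by induction, of the rest then multiply. -/

def IsRieszSeq {ι κ : Type*} [Fintype ι] [Fintype κ] (v : ι → κ → ℂ) (C D : ℝ) : Prop :=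
  ∀ a : ι → ℂ,
    C * ∑ i, ‖a i‖ ^ 2 ≤ ∑ k, ‖∑ i, a i * v i k‖ ^ 2 ∧
    ∑ k, ‖∑ i, a i * v i k‖ ^ 2 ≤ D * ∑ i, ‖a i‖ ^ 2

namespace IsRieszSeq

theorem comp_equiv {ι κ ι' κ' : Type*} [Fintype ι] [Fintype κ] [Fintype ι'] [Fintype κ']
    {v : ι → κ → ℂ} {C D : ℝ} (hv : IsRieszSeq v C D) (e : ι' ≃ ι) (f : κ' ≃ κ) :
    IsRieszSeq (fun i k => v (e i) (f k)) C D := by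
  intro a
  have hcoeff : ∑ i, ‖a i‖ ^ 2 = ∑ i, ‖a (e.symm i)‖ ^ 2 :=
    Fintype.sum_equiv e _ _ fun i => by simp
  have hsynth : ∑ k, ‖∑ i, a i * v (e i) (f k)‖ ^ 2 =
      ∑ k, ‖∑ i, a (e.symm i) * v i k‖ ^ 2 :=
    Fintype.sum_equiv f _ _ fun k => by
      rw [Fintype.sum_equiv e _ (fun i => a (e.symm i) * v i (f k)) fun i => by simp]
  rw [hcoeff, hsynth]
  exact hv (a ∘ e.symm)

theorem twistedProd {α β γ δ : Type*} [Fintype α] [Fintype β] [Fintype γ] [Fintype δ]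
    {u : α → γ → ℂ} {v : β → δ → ℂ} {C₁ D₁ C₂ D₂ : ℝ}
    (hu : IsRieszSeq u C₁ D₁) (hv : IsRieszSeq v C₂ D₂) (hC₁ : 0 ≤ C₁) (hD₁ : 0 ≤ D₁)
    (φ : α → δ → ℂ) (hφ : ∀ i k, ‖φ i k‖ = 1) :
    IsRieszSeq (fun (p : α × β) (q : γ × δ) => u p.1 q.1 * φ p.1 q.2 * v p.2 q.2)
      (C₁ * C₂) (D₁ * D₂) := by
  intro a
  set c : δ → α → ℂ := fun k i => φ i k * ∑ j, a (i, j) * v j k with hc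
  have hsynth : ∑ q : γ × δ, ‖∑ p : α × β, a p * (u p.1 q.1 * φ p.1 q.2 * v p.2 q.2)‖ ^ 2
      = ∑ k, ∑ g, ‖∑ i, c k i * u i g‖ ^ 2 := by
    rw [Fintype.sum_prod_type, Finset.sum_comm]
    refine sum_congr rfl fun k _ => sum_congr rfl fun g _ => ?_
    rw [Fintype.sum_prod_type]
    congr 2
    refine sum_congr rfl fun i _ => ?_
    simp only [hc, Finset.mul_sum, Finset.sum_mul]
    exact sum_congr rfl fun j _ => by ring
  have hcoeff : ∑ k, ∑ i, ‖c k i‖ ^ 2 = ∑ i, ∑ k, ‖∑ j, a (i, j) * v j k‖ ^ 2 := by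
    rw [Finset.sum_comm]
    simp only [hc, norm_mul, hφ, one_mul]
  rw [hsynth, Fintype.sum_prod_type]
  constructor
  · calc C₁ * C₂ * ∑ i, ∑ j, ‖a (i, j)‖ ^ 2 = C₁ * ∑ i, C₂ * ∑ j, ‖a (i, j)‖ ^ 2 := by
          rw [mul_assoc, ← Finset.mul_sum]
      _ ≤ C₁ * ∑ i, ∑ k, ‖∑ j, a (i, j) * v j k‖ ^ 2 := by
          gcongr with i
          exact (hv _).1
      _ = ∑ k, C₁ * ∑ i, ‖c k i‖ ^ 2 := by rw [← Finset.mul_sum, hcoeff]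
      _ ≤ ∑ k, ∑ g, ‖∑ i, c k i * u i g‖ ^ 2 := sum_le_sum fun k _ => (hu (c k)).1
  · calc ∑ k, ∑ g, ‖∑ i, c k i * u i g‖ ^ 2 ≤ ∑ k, D₁ * ∑ i, ‖c k i‖ ^ 2 :=
          sum_le_sum fun k _ => (hu (c k)).2
      _ = D₁ * ∑ i, ∑ k, ‖∑ j, a (i, j) * v j k‖ ^ 2 := by rw [← Finset.mul_sum, hcoeff]
      _ ≤ D₁ * ∑ i, D₂ * ∑ j, ‖a (i, j)‖ ^ 2 := by
          gcongr with i
          exact (hv _).2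
      _ = D₁ * D₂ * ∑ i, ∑ j, ‖a (i, j)‖ ^ 2 := by
          rw [mul_assoc, ← Finset.mul_sum]

end IsRieszSeq

theorem Matrix.inv_mulVec_dotProduct_transpose_mulVec {K m : Type*} [Field K] [Fintype m]
    [DecidableEq m] {M : Matrix m m K} (hM : IsUnit M.det) (x y : m → K) :
    M⁻¹ *ᵥ x ⬝ᵥ Mᵀ *ᵥ y = x ⬝ᵥ y := by
  rw [Matrix.dotProduct_mulVec, Matrix.vecMul_transpose, Matrix.mulVec_mulVec,
    Matrix.mul_nonsing_inv _ hM, Matrix.one_mulVec]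

theorem norm_exp_two_pi_I_mul (x : ℝ) : ‖Complex.exp (2 * Real.pi * Complex.I * x)‖ = 1 := by
  rw [show 2 * Real.pi * Complex.I * x = ((2 * Real.pi * x : ℝ) : ℂ) * Complex.I by push_cast; ring]
  exact Complex.norm_exp_ofReal_mul_I _

section IntegerMatrix

variable {d : ℕ}

theorem Expanding.det_ne_zero {M : Matrix (Fin d) (Fin d) ℤ} (h : Expanding M) :
    M.det ≠ 0 := by
  intro h0
  have hroot : (M.map (Int.cast : ℤ → ℂ)).charpoly.IsRoot 0 := by
    rw [← Matrix.mem_spectrum_iff_isRoot_charpoly, spectrum.zero_mem_iff,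
      Matrix.isUnit_iff_isUnit_det, ← Int.cast_det, h0]
    simp
  exact absurd (h 0 hroot) (by norm_num)

theorem isUnit_det_realMat {M : Matrix (Fin d) (Fin d) ℤ} (h : M.det ≠ 0) :
    IsUnit (realMat M).det := by
  rw [realMat, ← Int.cast_det]
  exact isUnit_iff_ne_zero.2 (Int.cast_ne_zero.2 h)

theorem realMat_mul (M N : Matrix (Fin d) (Fin d) ℤ) :
    realMat (M * N) = realMat M * realMat N :=
  Matrix.map_mul (f := Int.castRingHom ℝ)

theorem realMat_transpose (M : Matrix (Fin d) (Fin d) ℤ) : realMat Mᵀ = (realMat M)ᵀ :=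
  Matrix.transpose_map

theorem ip_eq_dotProduct (x y : Fin d → ℝ) : ip x y = x ⬝ᵥ y := rfl

theorem castVec_add (u v : Fin d → ℤ) : castVec (u + v) = castVec u + castVec v := by
  ext i
  simp [castVec]

theorem castVec_mulVec (M : Matrix (Fin d) (Fin d) ℤ) (v : Fin d → ℤ) :
    castVec (M *ᵥ v) = realMat M *ᵥ castVec v :=
  funext (RingHom.map_mulVec (Int.castRingHom ℝ) M v)

theorem castVec_dotProduct_castVec (u v : Fin d → ℤ) :
    castVec u ⬝ᵥ castVec v = ((u ⬝ᵥ v : ℤ) : ℝ) := by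
  simp [castVec, dotProduct]

theorem eVec_apply (M : Matrix (Fin d) (Fin d) ℤ) (B : Finset (Fin d → ℤ))
    (lam : Fin d → ℤ) (b : B) :
    eVec M B lam b = ((Real.sqrt B.card : ℂ))⁻¹ *
      Complex.exp (2 * Real.pi * Complex.I * ip ((realMat M)⁻¹ *ᵥ castVec b) (castVec lam)) :=
  rfl

end IntegerMatrix

theorem bigR_succ' {d : ℕ} (R : ℕ → Matrix (Fin d) (Fin d) ℤ) (m : ℕ) :
    bigR R (m + 1) = bigR (fun j => R (j + 1)) m * R 0 := by
  induction m with
  | zero => simp [bigR]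
  | succ m ih => rw [bigR, ih, ← Matrix.mul_assoc]; rfl

section Concatenation

variable {d n : ℕ} (R : ℕ → Matrix (Fin d) (Fin d) ℤ) (B L : ℕ → Finset (Fin d → ℤ))

theorem tuplePoint_succ (t : (j : Fin (n + 1)) → B j) :
    tuplePoint R B t = (realMat (R 0))⁻¹ *ᵥ
      (castVec (t 0) + tuplePoint (fun j => R (j + 1)) (fun j => B (j + 1)) (Fin.tail t)) := by
  rw [tuplePoint, tuplePoint, Fin.sum_univ_succ, Matrix.mulVec_add, Matrix.mulVec_sum]
  congr 1
  · simp [bigR]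
  · refine sum_congr rfl fun i _ => ?_
    change (realMat (bigR R ((i : ℕ) + 1 + 1)))⁻¹ *ᵥ _ = _
    rw [bigR_succ', realMat_mul, Matrix.mul_inv_rev, ← Matrix.mulVec_mulVec]
    rfl

theorem tupleFreq_succ (l : (j : Fin (n + 1)) → L j) :
    tupleFreq R L l =
      l 0 + (R 0)ᵀ *ᵥ tupleFreq (fun j => R (j + 1)) (fun j => L (j + 1)) (Fin.tail l) := by
  rw [tupleFreq, tupleFreq, Fin.sum_univ_succ, Matrix.mulVec_sum]
  congr 1
  · simp [bigR]
  · refine sum_congr rfl fun i _ => ?_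
    change (bigR R ((i : ℕ) + 1))ᵀ *ᵥ _ = _
    rw [bigR_succ', Matrix.transpose_mul, ← Matrix.mulVec_mulVec]
    rfl

theorem bigEVec_succ (hR : IsUnit (realMat (R 0)).det) (t : (j : Fin (n + 1)) → B j)
    (l : (j : Fin (n + 1)) → L j) :
    bigEVec R B L t l = eVec (R 0) (B 0) (l 0) (t 0) *
      Complex.exp (2 * Real.pi * Complex.I * ip ((realMat (R 0))⁻¹ *ᵥ
        tuplePoint (fun j => R (j + 1)) (fun j => B (j + 1)) (Fin.tail t)) (castVec (l 0))) *
      bigEVec (fun j => R (j + 1)) (fun j => B (j + 1)) (fun j => L (j + 1))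
        (Fin.tail t) (Fin.tail l) := by
  set p := tuplePoint (fun j => R (j + 1)) (fun j => B (j + 1)) (Fin.tail t)
  set μ := tupleFreq (fun j => R (j + 1)) (fun j => L (j + 1)) (Fin.tail l)
  have hip : ip (tuplePoint R B t) (castVec (tupleFreq R L l)) =
      ip ((realMat (R 0))⁻¹ *ᵥ castVec (t 0)) (castVec (l 0)) +
        ip ((realMat (R 0))⁻¹ *ᵥ p) (castVec (l 0)) + ip p (castVec μ) +
        ((((t 0 : Fin d → ℤ) ⬝ᵥ μ : ℤ)) : ℝ) := by
    simp only [ip_eq_dotProduct]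
    rw [tuplePoint_succ, tupleFreq_succ, castVec_add, castVec_mulVec, realMat_transpose,
      dotProduct_add, Matrix.inv_mulVec_dotProduct_transpose_mulVec hR, Matrix.mulVec_add,
      add_dotProduct, add_dotProduct, castVec_dotProduct_castVec]
    ring
  have hnorm : ((Real.sqrt (∏ j ∈ range (n + 1), ((B j).card : ℝ)) : ℂ))⁻¹ =
      ((Real.sqrt (B 0).card : ℂ))⁻¹ *
        ((Real.sqrt (∏ j ∈ range n, ((B (j + 1)).card : ℝ)) : ℂ))⁻¹ := by
    rw [prod_range_succ', mul_comm, Real.sqrt_mul (Nat.cast_nonneg _), Complex.ofReal_mul,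
      mul_inv]
  have hint : Complex.exp (2 * Real.pi * Complex.I * (((t 0 : Fin d → ℤ) ⬝ᵥ μ : ℤ) : ℂ)) = 1 := by
    rw [mul_comm]
    exact Complex.exp_int_mul_two_pi_mul_I _
  rw [bigEVec, bigEVec, hip, hnorm, eVec_apply (R 0) (B 0) (l 0) (t 0)]
  simp only [Complex.ofReal_add, Complex.ofReal_intCast, mul_add, Complex.exp_add, hint]
  ring

end Concatenation

theorem isRieszSeq_bigEVec {d n : ℕ} (R : ℕ → Matrix (Fin d) (Fin d) ℤ)
    (B L : ℕ → Finset (Fin d → ℤ)) (C D : ℕ → ℝ) (hR : ∀ j < n, (R j).det ≠ 0)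
    (hC : ∀ j < n, 0 ≤ C j) (hD : ∀ j < n, 0 ≤ D j)
    (htriple : ∀ j < n, IsRieszTriple (R j) (B j) (L j) (C j) (D j)) :
    IsRieszSeq (fun (l : (j : Fin n) → L j) (t : (j : Fin n) → B j) => bigEVec R B L t l)
      (∏ j ∈ range n, C j) (∏ j ∈ range n, D j) := by
  induction n generalizing R B L C D with
  | zero =>
    have hone : ∀ (t : (j : Fin 0) → B j) (l : (j : Fin 0) → L j), bigEVec R B L t l = 1 := by
      simp [bigEVec, tuplePoint, tupleFreq, ip]
    intro a
    simp [hone]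
  | succ n ih =>
    have hhead : IsRieszSeq (fun (lam : L 0) (b : B 0) => eVec (R 0) (B 0) lam b) (C 0) (D 0) :=
      htriple 0 n.succ_pos
    have htail := ih (fun j => R (j + 1)) (fun j => B (j + 1)) (fun j => L (j + 1))
      (fun j => C (j + 1)) (fun j => D (j + 1)) (fun j hj => hR (j + 1) (by omega))
      (fun j hj => hC (j + 1) (by omega)) (fun j hj => hD (j + 1) (by omega))
      (fun j hj => htriple (j + 1) (by omega))
    have hprod := hhead.twistedProd htail (hC 0 n.succ_pos) (hD 0 n.succ_pos)
      (fun lam t' => Complex.exp (2 * Real.pi * Complex.I * ip ((realMat (R 0))⁻¹ *ᵥ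
        tuplePoint (fun j => R (j + 1)) (fun j => B (j + 1)) t') (castVec lam)))
      (fun _ _ => norm_exp_two_pi_I_mul _)
    rw [prod_range_succ', prod_range_succ', mul_comm _ (C 0), mul_comm _ (D 0)]
    convert hprod.comp_equiv (Fin.consEquiv fun j : Fin (n + 1) => L j).symm
      (Fin.consEquiv fun j : Fin (n + 1) => B j).symm using 1
    funext l t
    exact bigEVec_succ R B L (isUnit_det_realMat (hR 0 n.succ_pos)) t l

theorem riesz_triple_concatenation_general {d n : ℕ}
    (R : ℕ → Matrix (Fin d) (Fin d) ℤ) (B L : ℕ → Finset (Fin d → ℤ)) (C D : ℕ → ℝ)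
    (hexp : ∀ j, Expanding (R j))
    (hCD : ∀ j, 0 < C j ∧ C j ≤ D j)
    (htriple : ∀ j < n, IsRieszTriple (R j) (B j) (L j) (C j) (D j)) :
    ∀ a : ((j : Fin n) → (L (j : ℕ))) → ℂ,
      (∏ j ∈ Finset.range n, C j) * ∑ l, ‖a l‖ ^ 2 ≤
        ∑ t : (j : Fin n) → (B (j : ℕ)), ‖∑ l, a l * bigEVec R B L t l‖ ^ 2 ∧
      ∑ t : (j : Fin n) → (B (j : ℕ)), ‖∑ l, a l * bigEVec R B L t l‖ ^ 2 ≤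
        (∏ j ∈ Finset.range n, D j) * ∑ l, ‖a l‖ ^ 2 :=
  isRieszSeq_bigEVec R B L C D (fun j _ => (hexp j).det_ne_zero) (fun j _ => (hCD j).1.le)
    (fun j _ => ((hCD j).1.trans_le (hCD j).2).le) htriple

theorem riesz_triple_concatenation {d n : ℕ}
    (R : ℕ → Matrix (Fin d) (Fin d) ℤ) (B L : ℕ → Finset (Fin d → ℤ)) (C D : ℕ → ℝ)
    (hexp : ∀ j, Expanding (R j))
    (h0B : ∀ j, (0 : Fin d → ℤ) ∈ B j) (h0L : ∀ j, (0 : Fin d → ℤ) ∈ L j)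
    (hCD : ∀ j, 0 < C j ∧ C j ≤ D j)
    (htriple : ∀ j < n, IsRieszTriple (R j) (B j) (L j) (C j) (D j)) :
    ∀ a : ((j : Fin n) → (L (j : ℕ))) → ℂ,
      (∏ j ∈ Finset.range n, C j) * ∑ l, ‖a l‖ ^ 2 ≤
        ∑ t : (j : Fin n) → (B (j : ℕ)), ‖∑ l, a l * bigEVec R B L t l‖ ^ 2 ∧
      ∑ t : (j : Fin n) → (B (j : ℕ)), ‖∑ l, a l * bigEVec R B L t l‖ ^ 2 ≤
        (∏ j ∈ Finset.range n, D j) * ∑ l, ‖a l‖ ^ 2 :=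
  riesz_triple_concatenation_general R B L C D hexp hCD htriple

end
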